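/- Let V be a finite set of 2n qubits and let M be a perfect matching on V, i.e. a partition of V into n disjoint pairs. Define W₀(x,h) = −(ln 2)/2 + iπ·x·h for binary x, h. Then for every v : V → {0,1}, ∑_{h : M → {0,1}} exp( ∑_{{i,j}∈M} ( W₀(v_i, h_{\{i,j\}}) + W₀(v_j, h_{\{i,j\}}) ) ) = ∏_{{i,j}∈M} δ_{v_i v_j}, which is the wave function of n entangled pairs |00⟩+|11⟩ distributed according to the matching M (a state obeying the entanglement volume law). -/
import Mathlib


open Complex Real Finset

lemma key_pair_W0 (W0 : Fin 2 → Fin 2 → ℂ)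
    (hW : ∀ x h : Fin 2, W0 x h
      = -(Real.log 2 / 2) + Complex.I * Real.pi * ((x : ℕ) : ℂ) * ((h : ℕ) : ℂ))
    (a b : Fin 2) :
    ∑ x : Fin 2, Complex.exp (W0 a x + W0 b x) = if a = b then (1 : ℂ) else 0 := by
  have hlog : Complex.exp (((-Real.log 2 : ℝ)) : ℂ) = 1/2 := by
    rw [← Complex.ofReal_exp, Real.exp_neg, Real.exp_log (by norm_num)]; norm_num
  have hpi : Complex.exp (Complex.I * Real.pi) = -1 := by
    rw [mul_comm, Complex.exp_pi_mul_I]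
  have h0 : -(((Real.log 2:ℝ):ℂ)/2) + -(((Real.log 2:ℝ):ℂ)/2) = ((-Real.log 2:ℝ):ℂ) := by
    push_cast; ring
  have h1 : -(((Real.log 2:ℝ):ℂ)/2) + (-(((Real.log 2:ℝ):ℂ)/2) + Complex.I * Real.pi)
      = ((-Real.log 2:ℝ):ℂ) + Complex.I * Real.pi := by push_cast; ring
  have h1' : -(((Real.log 2:ℝ):ℂ)/2) + Complex.I * Real.pi + -(((Real.log 2:ℝ):ℂ)/2)
      = ((-Real.log 2:ℝ):ℂ) + Complex.I * Real.pi := by push_cast; ring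
  have h2 : -(((Real.log 2:ℝ):ℂ)/2) + Complex.I * Real.pi
        + (-(((Real.log 2:ℝ):ℂ)/2) + Complex.I * Real.pi)
      = ((-Real.log 2:ℝ):ℂ) + Complex.I * Real.pi + Complex.I * Real.pi := by push_cast; ring
  fin_cases a <;> fin_cases b <;>
    simp only [hW, Fin.sum_univ_two, Fin.val_zero, Fin.val_one, Nat.cast_zero, Nat.cast_one,
      mul_zero, mul_one, zero_mul, add_zero, Fin.isValue]
  · rw [h0, hlog]; norm_num
  · rw [h0, h1, Complex.exp_add, hlog, hpi]; norm_num
  · rw [h0, h1', Complex.exp_add, hlog, hpi]; norm_num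
  · rw [h0, h2, Complex.exp_add, Complex.exp_add, hlog, hpi]; norm_num

/-- The phase-gadget weight at `θ = 0`: `W₀(x,h) = −(ln 2)/2 + iπ·x·h` for binary `x, h`. -/
noncomputable def W0 (x h : Fin 2) : ℂ :=
  -(Real.log 2 / 2) + Complex.I * Real.pi * ((x : ℕ) : ℂ) * ((h : ℕ) : ℂ)

/-- For a perfect matching `M` on a set `V` of `2n` qubits, the wave function
`∏_{{i,j}∈M} δ_{v_i v_j}` of `n` entangled pairs `|00⟩+|11⟩` (a volume-law entangled state)
is exactly represented by an RBM with one hidden neuron per pair, connected to the two qubits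
of the pair with weight `W₀`. -/
theorem entangled_pairs_RBM {V : Type*} [Fintype V] [DecidableEq V] (n : ℕ)
    (hV : Fintype.card V = 2 * n) (M : Finset (Sym2 V)) (hMcard : M.card = n)
    (hdiag : ∀ e ∈ M, ¬ e.IsDiag) (hcover : ∀ x : V, ∃! e, e ∈ M ∧ x ∈ e)
    (v : V → Fin 2) :
    ∑ h : M → Fin 2, Complex.exp
        (∑ e : M, Sym2.lift ⟨fun i j => W0 (v i) (h e) + W0 (v j) (h e),
            fun i j => by dsimp only; rw [add_comm]⟩ (e : Sym2 V))
      = ∏ e ∈ M, Sym2.lift ⟨fun i j => if v i = v j then (1 : ℂ) else 0,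
          fun i j => by dsimp only; simp only [eq_comm]⟩ e := by
  classical
  have step1 : ∀ h : M → Fin 2,
      Complex.exp (∑ e : M, Sym2.lift ⟨fun i j => W0 (v i) (h e) + W0 (v j) (h e),
            fun i j => by dsimp only; rw [add_comm]⟩ (e : Sym2 V))
      = ∏ e : M, Complex.exp (Sym2.lift ⟨fun i j => W0 (v i) (h e) + W0 (v j) (h e),
            fun i j => by dsimp only; rw [add_comm]⟩ (e : Sym2 V)) := fun h =>
    Complex.exp_sum _ _
  simp only [step1]
  rw [← Fintype.prod_sum fun (e : M) (x : Fin 2) =>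
    Complex.exp (Sym2.lift ⟨fun i j => W0 (v i) x + W0 (v j) x,
      fun i j => by dsimp only; rw [add_comm]⟩ (e : Sym2 V))]
  rw [← Finset.prod_attach M fun e => Sym2.lift ⟨fun i j => if v i = v j then (1 : ℂ) else 0,
      fun i j => by dsimp only; simp only [eq_comm]⟩ e]
  apply Finset.prod_congr rfl
  intro e _
  induction (e : Sym2 V) using Sym2.ind with
  | _ i j =>
    simp only [Sym2.lift_mk]
    exact key_pair_W0 W0 (fun _ _ => rfl) (v i) (v j)
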